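/- Let α, β, C, C' > 0, let X_1, …, X_T be i.i.d. (α, β, C, C')-second order Pareto random variables, set B = (2C'T)^(1/((1+β)α)) and Q1 = (1/(2C')) · max{(2C'/C)^((1+β)/β), (8C)^(1+β)}. Then for T ≥ Q1 one has P(max_{1≤i≤T} X_i ≤ B) ≤ exp(−(T C / 2) B^(−α)) = exp(−(C/2)(2C')^(−1/(1+β)) T^(β/(β+1))), and consequently | ∫_0^B ( P(max_{1≤i≤T} X_i ≤ x) − exp(−T C x^(−α)) ) dx | ≤ 2 B · exp(−(T C / 2) B^(−α)). -/

import Mathlib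

/-!
The maximum of `T` i.i.d. variables has CDF `F(x)^T`. At the threshold `B` the second order
term `C' B^(-α(1+β)) = 1/(2T)` is at most half of the first order term `C B^(-α)` (this is what
`T ≥ Q1` buys), so `F(B) ≤ 1 - (C/2) B^(-α)` and `F(B)^T ≤ exp(-(TC/2) B^(-α))`. On `(0, B]` both
`F(x)^T` and `exp(-TC x^(-α))` lie between `0` and this bound, which bounds the integral.
-/

open MeasureTheory ProbabilityTheory Real

/-- A probability distribution `μ` on `ℝ` is `(α, β, C, C')`-second order Pareto if its
cumulative distribution function `F(x) = μ (Iic x)` satisfies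
`|1 - C x^(-α) - F(x)| ≤ C' x^(-α(1+β))` for every `x > 0`. -/
def IsSecondOrderPareto (μ : Measure ℝ) (α β C C' : ℝ) : Prop :=
  ∀ x : ℝ, 0 < x → |1 - C * x ^ (-α) - (μ (Set.Iic x)).toReal| ≤ C' * x ^ (-(α * (1 + β)))

theorem measure_iSup_le_eq_pow {Ω ι : Type*} [MeasurableSpace Ω] [Fintype ι] [Nonempty ι]
    {P : Measure Ω} {X : ι → Ω → ℝ} (hmeas : ∀ i, Measurable (X i)) (hindep : iIndepFun X P)
    {μ : Measure ℝ} (hmap : ∀ i, P.map (X i) = μ) (x : ℝ) :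
    P {ω | (⨆ i, X i ω) ≤ x} = μ (Set.Iic x) ^ Fintype.card ι := by
  have hset : {ω | (⨆ i, X i ω) ≤ x} = ⋂ i, X i ⁻¹' Set.Iic x := by
    ext ω
    simpa using ciSup_le_iff (Set.finite_range (X · ω)).bddAbove
  have hmarg (i : ι) : P (X i ⁻¹' Set.Iic x) = μ (Set.Iic x) := by
    rw [← hmap i, Measure.map_apply (hmeas i) measurableSet_Iic]
  rw [hset, hindep.meas_iInter fun i => ⟨Set.Iic x, measurableSet_Iic, rfl⟩]
  simp [hmarg]

theorem pow_le_exp_neg_mul {a c : ℝ} (ha : 0 ≤ a) (hac : a ≤ 1 - c) (n : ℕ) :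
    a ^ n ≤ exp (-(n * c)) :=
  calc a ^ n ≤ exp (-c) ^ n := pow_le_pow_left₀ ha (by linarith [add_one_le_exp (-c)]) n
    _ = exp (-(n * c)) := by rw [← exp_nat_mul, mul_neg]

theorem IsSecondOrderPareto.toReal_Iic_le {μ : Measure ℝ} {α β C C' : ℝ}
    (hμ : IsSecondOrderPareto μ α β C C') (hC : 0 < C) {x : ℝ} (hx : 0 < x)
    (hxβ : 2 * C' / C ≤ x ^ (α * β)) :
    (μ (Set.Iic x)).toReal ≤ 1 - C / 2 * x ^ (-α) := by
  have hsecond : C' * x ^ (-(α * (1 + β))) ≤ C / 2 * x ^ (-α) := by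
    have hsplit : x ^ (-(α * (1 + β))) = x ^ (-α) * (x ^ (α * β))⁻¹ := by
      rw [← rpow_neg hx.le, ← rpow_add hx]
      ring_nf
    have hC' : C' * (x ^ (α * β))⁻¹ ≤ C / 2 := by
      rw [← div_eq_mul_inv, div_le_iff₀ (rpow_pos_of_pos hx _)]
      rw [div_le_iff₀ hC] at hxβ
      linarith
    rw [hsplit, ← mul_assoc, mul_comm C', mul_assoc, mul_comm (C / 2)]
    exact mul_le_mul_of_nonneg_left hC' (rpow_pos_of_pos hx _).le
  linarith [(abs_le.mp (hμ x hx)).1]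

theorem abs_setIntegral_Ioc_sub_le {f g : ℝ → ℝ} {a b E : ℝ} (hab : a ≤ b)
    (hf : ∀ x ∈ Set.Ioc a b, 0 ≤ f x ∧ f x ≤ E) (hg : ∀ x ∈ Set.Ioc a b, 0 ≤ g x ∧ g x ≤ E) :
    |∫ x in Set.Ioc a b, (f x - g x)| ≤ E * (b - a) := by
  rw [← Real.volume_real_Ioc_of_le hab, ← Real.norm_eq_abs]
  refine norm_setIntegral_le_of_norm_le_const measure_Ioc_lt_top fun x hx => ?_
  exact abs_sub_le_of_nonneg_of_le (hf x hx).1 (hf x hx).2 (hg x hx).1 (hg x hx).2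

theorem rpow_one_div_mul_rpow_mul {u : ℝ} (hu : 0 ≤ u) {p α : ℝ} (hp : p ≠ 0) (hα : α ≠ 0)
    (r : ℝ) : (u ^ (1 / (p * α))) ^ (α * r) = u ^ (r / p) := by
  rw [← rpow_mul hu]
  congr 1
  field_simp

theorem neg_mul_mul_rpow_neg_one_div_eq {β : ℝ} (hβ : 0 < β) (C K : ℝ) (hK : 0 < K) {T : ℝ}
    (hT : 0 < T) :
    -(T * C / 2) * (K * T) ^ (-1 / (1 + β))
      = -(C / 2 * K ^ (-(1 / (1 + β)))) * T ^ (β / (β + 1)) := by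
  have hTT : T * T ^ (-(1 / (1 + β))) = T ^ (β / (β + 1)) := by
    rw [show β / (β + 1) = 1 + -(1 / (1 + β)) by field_simp; ring, rpow_add hT, rpow_one]
  rw [mul_rpow hK.le hT.le, neg_div, ← hTT]
  ring

theorem neg_mul_rpow_neg_le_half {α k x B : ℝ} (hα : 0 < α) (hk : 0 ≤ k) (hx : 0 < x)
    (hxB : x ≤ B) : -(k * x ^ (-α)) ≤ -(k / 2) * B ^ (-α) := by
  have hBx : B ^ (-α) ≤ x ^ (-α) := rpow_le_rpow_of_nonpos hx hxB (by linarith)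
  nlinarith [rpow_pos_of_pos (hx.trans_le hxB) (-α)]

theorem bulk_term_bound
    {Ω : Type*} [MeasurableSpace Ω] (P : Measure Ω) [IsProbabilityMeasure P]
    (α β C C' : ℝ) (hα : 0 < α) (hβ : 0 < β) (hC : 0 < C) (hC' : 0 < C')
    (T : ℕ) (X : Fin T → Ω → ℝ)
    (hmeas : ∀ i, Measurable (X i))
    (hindep : iIndepFun X P)
    (μ : Measure ℝ) (hmap : ∀ i, P.map (X i) = μ)
    (hpareto : IsSecondOrderPareto μ α β C C')
    (B : ℝ) (hB : B = (2 * C' * (T : ℝ)) ^ (1 / ((1 + β) * α)))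
    (hT : (1 / (2 * C')) * max ((2 * C' / C) ^ ((1 + β) / β)) ((8 * C) ^ (1 + β)) ≤ (T : ℝ)) :
    ((P {ω | (⨆ i, X i ω) ≤ B}).toReal ≤ Real.exp (-((T : ℝ) * C / 2) * B ^ (-α))
      ∧ Real.exp (-((T : ℝ) * C / 2) * B ^ (-α))
          = Real.exp (-(C / 2 * (2 * C') ^ (-(1 / (1 + β)))) * (T : ℝ) ^ (β / (β + 1))))
      ∧ |∫ x in Set.Ioc (0 : ℝ) B,
            ((P {ω | (⨆ i, X i ω) ≤ x}).toReal - Real.exp (-((T : ℝ) * C * x ^ (-α))))| ≤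
          2 * B * Real.exp (-((T : ℝ) * C / 2) * B ^ (-α)) := by
  have hT0 : (0 : ℝ) < T := lt_of_lt_of_le (by positivity) hT
  have : Nonempty (Fin T) := ⟨⟨0, by exact_mod_cast hT0⟩⟩
  have hu : 0 < 2 * C' * (T : ℝ) := by positivity
  have hBpos : 0 < B := hB ▸ rpow_pos_of_pos hu _
  have hBrpow := hB ▸ rpow_one_div_mul_rpow_mul hu.le (by positivity : 1 + β ≠ 0) hα.ne'
  have hBα : B ^ (-α) = (2 * C' * T) ^ (-1 / (1 + β)) := by rw [← hBrpow, mul_neg_one]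
  have hQ : (2 * C' / C) ^ ((1 + β) / β) ≤ 2 * C' * T := by
    rw [one_div_mul_eq_div, div_le_iff₀ (by positivity)] at hT
    linarith [le_max_left ((2 * C' / C) ^ ((1 + β) / β)) ((8 * C) ^ (1 + β))]
  have hBαβ : 2 * C' / C ≤ B ^ (α * β) := by
    rwa [hBrpow, ← inv_div (1 + β), le_rpow_inv_iff_of_pos (by positivity) hu.le (by positivity)]
  have : IsProbabilityMeasure μ := hmap ⟨0, by exact_mod_cast hT0⟩ ▸
    Measure.isProbabilityMeasure_map (hmeas _).aemeasurable
  have hmax : (P {ω | (⨆ i, X i ω) ≤ B}).toReal ≤ exp (-((T : ℝ) * C / 2) * B ^ (-α)) := by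
    rw [measure_iSup_le_eq_pow hmeas hindep hmap, ENNReal.toReal_pow, Fintype.card_fin]
    convert pow_le_exp_neg_mul ENNReal.toReal_nonneg (hpareto.toReal_Iic_le hC hBpos hBαβ) T
      using 2
    ring
  refine ⟨⟨hmax, by rw [hBα, neg_mul_mul_rpow_neg_one_div_eq hβ C _ (by positivity) hT0]⟩, ?_⟩
  have hcdf (x : ℝ) (hx : x ∈ Set.Ioc 0 B) :
      (P {ω | (⨆ i, X i ω) ≤ x}).toReal ≤ (P {ω | (⨆ i, X i ω) ≤ B}).toReal :=
    ENNReal.toReal_mono (measure_ne_top _ _) (measure_mono fun _ hω => le_trans hω hx.2)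
  calc _ ≤ exp (-((T : ℝ) * C / 2) * B ^ (-α)) * (B - 0) :=
        abs_setIntegral_Ioc_sub_le hBpos.le
          (fun x hx => ⟨ENNReal.toReal_nonneg, (hcdf x hx).trans hmax⟩)
          (fun x hx => ⟨(exp_pos _).le, exp_le_exp.2 (neg_mul_rpow_neg_le_half hα (by positivity) hx.1 hx.2)⟩)
    _ ≤ 2 * B * exp (-((T : ℝ) * C / 2) * B ^ (-α)) := by
        nlinarith [exp_pos (-((T : ℝ) * C / 2) * B ^ (-α))]
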